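/- Let I be an ideal of A and G ⊆ I. Then G is an SG-basis for I if and only if every nonzero h ∈ I has an SG-representation with respect to G, i.e., a representation h = Σ_{i=1}^M a_i g_i with a_i ∈ A and g_i ∈ G such that max_i lp(a_i g_i) = lp(h). -/

import Mathlib

/-!
Leading terms are multiplicative over a domain, and the leading terms of elements of `A` span
`R[Lt A]` additively. Hence the ideal `⟨Lt G⟩` of `R[Lt A]` consists exactly of the sums of
leading terms `lt(a g)` with `a ∈ A`, `g ∈ G`, and `G ⊆ I` is an SG-basis iff every `lt(h)`,
`h ∈ I`, is such a sum. An SG-representation `h = ∑ aᵢ gᵢ` gives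
`lt(h) = ∑_{lp(aᵢ gᵢ) = lp(h)} lt(aᵢ gᵢ)`. Conversely, if `lt(h) = ∑ lt(aⱼ gⱼ)`, then
`h - ∑_{lp(aⱼ gⱼ) = lp(h)} aⱼ gⱼ` lies in `I` and has a smaller leading power product, so
well-founded induction on `lp(h)` produces an SG-representation.
-/

open MvPolynomial

/-- A term order on the monomials (exponent vectors) of a polynomial ring in `n`
variables: a well-founded linear order compatible with multiplication of power
products (i.e. with addition of exponent vectors). -/
structure TermOrder (n : ℕ) where
  lo : LinearOrder (Fin n →₀ ℕ)
  wf : WellFounded lo.lt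
  add_le_add : ∀ a b c : Fin n →₀ ℕ, lo.le a b → lo.le (a + c) (b + c)

namespace TermOrder

variable {n : ℕ} {R : Type*} [CommRing R]

/-- `lp p`: the leading power product (exponent vector) of `p`; junk value `0`
for the zero polynomial. -/
noncomputable def lp (ord : TermOrder n) (p : MvPolynomial (Fin n) R) : Fin n →₀ ℕ :=
  (@Finset.max _ ord.lo p.support).unbotD 0

/-- `lc p`: the leading coefficient of `p` (0 if `p = 0`). -/
noncomputable def lc (ord : TermOrder n) (p : MvPolynomial (Fin n) R) : R :=
  p.coeff (ord.lp p)

/-- `ltm p`: the leading term `lc(p)·lp(p)` of `p` (0 if `p = 0`). -/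
noncomputable def ltm (ord : TermOrder n) (p : MvPolynomial (Fin n) R) : MvPolynomial (Fin n) R :=
  monomial (ord.lp p) (ord.lc p)

end TermOrder

variable {n : ℕ} {R : Type*} [CommRing R]

/-- An `F`-power product: a finite product `∏ fᵢ^{eᵢ}` with `fᵢ ∈ F`. -/
def IsPowerProduct (F : Set (MvPolynomial (Fin n) R)) (q : MvPolynomial (Fin n) R) : Prop :=
  ∃ e : MvPolynomial (Fin n) R →₀ ℕ, (e.support : Set (MvPolynomial (Fin n) R)) ⊆ F ∧
    q = e.prod (fun f k => f ^ k)

/-- `F` is a SAGBI basis for the `R`-subalgebra `A`: `R[Lt A] = R[Lt F]`. -/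
def IsSAGBI (ord : TermOrder n) (A : Subalgebra R (MvPolynomial (Fin n) R))
    (F : Set (MvPolynomial (Fin n) R)) : Prop :=
  Algebra.adjoin R (ord.ltm '' (A : Set (MvPolynomial (Fin n) R))) =
    Algebra.adjoin R (ord.ltm '' F)

/-- One step of s-reduction of `g` to `h` via `F`. -/
def SStep (ord : TermOrder n) (F : Set (MvPolynomial (Fin n) R))
    (g h : MvPolynomial (Fin n) R) : Prop :=
  ∃ (β : Fin n →₀ ℕ) (N : ℕ) (q : Fin N → MvPolynomial (Fin n) R) (r : Fin N → R),
    g.coeff β ≠ 0 ∧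
    (∀ i, IsPowerProduct F (q i) ∧ q i ≠ 0 ∧ ord.lp (q i) = β) ∧
    g.coeff β = ∑ i, r i * ord.lc (q i) ∧
    h = g - ∑ i, C (r i) * q i

/-- `g` s-reduces to `h` via `F`: a finite chain of one-step s-reductions. -/
def SReduce (ord : TermOrder n) (F : Set (MvPolynomial (Fin n) R)) :
    MvPolynomial (Fin n) R → MvPolynomial (Fin n) R → Prop :=
  Relation.ReflTransGen (SStep ord F)

/-- One step of si-reduction of `h` to `h'` via `G`, relative to the subalgebra `A`. -/
def SiStep (ord : TermOrder n) (A : Subalgebra R (MvPolynomial (Fin n) R))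
    (G : Set (MvPolynomial (Fin n) R)) (h h' : MvPolynomial (Fin n) R) : Prop :=
  ∃ (α : Fin n →₀ ℕ) (M : ℕ) (g a : Fin M → MvPolynomial (Fin n) R),
    h.coeff α ≠ 0 ∧
    (∀ i, g i ∈ G) ∧ (∀ i, a i ∈ A) ∧
    (∀ i, a i * g i ≠ 0 ∧ ord.lp (a i * g i) = α) ∧
    (monomial α (h.coeff α) : MvPolynomial (Fin n) R) = ∑ i, ord.ltm (a i * g i) ∧
    h' = h - ∑ i, a i * g i

/-- `h` si-reduces to `h'` via `G`: a finite chain of one-step si-reductions. -/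
def SiReduce (ord : TermOrder n) (A : Subalgebra R (MvPolynomial (Fin n) R))
    (G : Set (MvPolynomial (Fin n) R)) :
    MvPolynomial (Fin n) R → MvPolynomial (Fin n) R → Prop :=
  Relation.ReflTransGen (SiStep ord A G)

/-- The subalgebra `R[Lt A]` generated by the leading terms of elements of `A`. -/
noncomputable def LtAlg (ord : TermOrder n) (A : Subalgebra R (MvPolynomial (Fin n) R)) :
    Subalgebra R (MvPolynomial (Fin n) R) :=
  Algebra.adjoin R (ord.ltm '' (A : Set (MvPolynomial (Fin n) R)))

/-- The leading term of an element of `A`, as an element of `R[Lt A]`. -/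
noncomputable def ltA (ord : TermOrder n) (A : Subalgebra R (MvPolynomial (Fin n) R))
    (a : A) : LtAlg ord A :=
  ⟨ord.ltm (a : MvPolynomial (Fin n) R), Algebra.subset_adjoin ⟨a, a.2, rfl⟩⟩

/-- `G ⊆ I` is a SAGBI–Gröbner basis (SG-basis) for the ideal `I` of `A`:
`Lt G` generates the ideal `⟨Lt I⟩` in the subalgebra `R[Lt A]`. -/
def IsSGBasis (ord : TermOrder n) (A : Subalgebra R (MvPolynomial (Fin n) R))
    (I : Ideal A) (G : Set A) : Prop :=
  Ideal.span
      ((Subtype.val ⁻¹' (ord.ltm '' (Subtype.val '' G)) : Set (LtAlg ord A))) =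
  Ideal.span
      ((Subtype.val ⁻¹' (ord.ltm '' (Subtype.val '' (I : Set A))) : Set (LtAlg ord A)))

open scoped MonomialOrder Pointwise

theorem AddSubmonoid.mul_mem_closure_of_mul_subset {M : Type*} [NonUnitalNonAssocSemiring M]
    {S T : Set M} (hST : S * T ⊆ T) {x y : M} (hx : x ∈ AddSubmonoid.closure S)
    (hy : y ∈ AddSubmonoid.closure T) : x * y ∈ AddSubmonoid.closure T :=
  AddSubmonoid.closure_mono hST
    (AddSubmonoid.closure_mul_closure S T ▸ AddSubmonoid.mul_mem_mul hx hy)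

namespace MonomialOrder

variable {σ : Type*} (m : MonomialOrder σ)

theorem coeff_degree_leadingTerm (p : MvPolynomial σ R) :
    (m.leadingTerm p).coeff (m.degree p) = p.coeff (m.degree p) := by
  classical
  simp [leadingTerm, leadingCoeff, coeff_monomial]

theorem coeff_eq_zero_of_degree_le_of_ne {p : MvPolynomial σ R} {d : σ →₀ ℕ}
    (hle : m.degree p ≼[m] d) (hne : m.degree p ≠ d) : p.coeff d = 0 :=
  m.coeff_eq_zero_of_lt (lt_of_le_of_ne hle (m.toSyn.injective.ne hne))

theorem exists_degree_eq_of_eq_sum {ι : Type*} {s : Finset ι} {p : MvPolynomial σ R}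
    {q : ι → MvPolynomial σ R} (hp : p ≠ 0) (hpq : p = ∑ i ∈ s, q i)
    (hq : ∀ i ∈ s, m.degree (q i) ≼[m] m.degree p) :
    ∃ i ∈ s, m.degree (q i) = m.degree p := by
  by_contra! hne
  apply m.coeff_degree_ne_zero_iff.mpr hp
  nth_rw 2 [hpq]
  rw [coeff_sum]
  exact Finset.sum_eq_zero fun i hi => m.coeff_eq_zero_of_degree_le_of_ne (hq i hi) (hne i hi)

theorem degree_sub_lt_of_coeff_eq {p q : MvPolynomial σ R} (hq : m.degree q ≼[m] m.degree p)
    (hcoeff : q.coeff (m.degree p) = p.coeff (m.degree p)) (hpq : p - q ≠ 0) :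
    m.degree (p - q) ≺[m] m.degree p := by
  refine lt_of_le_of_ne (m.degree_sub_le.trans (max_le le_rfl hq)) fun h => ?_
  refine m.coeff_degree_ne_zero_iff.mpr hpq ?_
  rw [m.toSyn.injective h, coeff_sub, hcoeff, sub_self]

theorem image_leadingTerm_mul_subset [NoZeroDivisors R] (S T : Set (MvPolynomial σ R)) :
    m.leadingTerm '' S * m.leadingTerm '' T ⊆ m.leadingTerm '' (S * T) := by
  rintro _ ⟨_, ⟨p, hp, rfl⟩, _, ⟨q, hq, rfl⟩, rfl⟩
  exact ⟨p * q, Set.mul_mem_mul hp hq, m.leadingTerm_mul p q⟩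

theorem mem_closure_leadingTerm_of_mem_adjoin [NoZeroDivisors R]
    {A : Subalgebra R (MvPolynomial σ R)} {x : MvPolynomial σ R}
    (hx : x ∈ Algebra.adjoin R (m.leadingTerm '' A)) :
    x ∈ AddSubmonoid.closure (m.leadingTerm '' A) := by
  induction hx using Algebra.adjoin_induction with
  | mem x hx => exact AddSubmonoid.subset_closure hx
  | algebraMap r =>
    exact AddSubmonoid.subset_closure ⟨C r, A.algebraMap_mem r, m.leadingTerm_C r⟩
  | add x y _ _ hx hy => exact add_mem hx hy
  | mul x y _ _ hx hy =>
    refine AddSubmonoid.mul_mem_closure_of_mul_subset ?_ hx hy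
    exact (m.image_leadingTerm_mul_subset _ _).trans
      (Set.image_mono (Set.mul_subset_iff.mpr fun _ ha _ hb => A.mul_mem ha hb))

variable {Q : Set (MvPolynomial σ R)} {d : σ →₀ ℕ}

theorem degree_le_of_mem_closure {p : MvPolynomial σ R}
    (hp : p ∈ AddSubmonoid.closure {q ∈ Q | m.degree q ≼[m] d}) : m.degree p ≼[m] d := by
  induction hp using AddSubmonoid.closure_induction with
  | mem q hq => exact hq.2
  | zero => simp
  | add p q _ _ hp hq => exact m.degree_add_le.trans (max_le hp hq)

theorem monomial_coeff_mem_closure {p : MvPolynomial σ R}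
    (hp : p ∈ AddSubmonoid.closure {q ∈ Q | m.degree q ≼[m] d}) :
    monomial d (p.coeff d) ∈ AddSubmonoid.closure (m.leadingTerm '' Q) := by
  induction hp using AddSubmonoid.closure_induction with
  | mem q hq =>
    by_cases hd : m.degree q = d
    · subst hd
      exact AddSubmonoid.subset_closure ⟨q, hq.1, rfl⟩
    · rw [m.coeff_eq_zero_of_degree_le_of_ne hq.2 hd, map_zero]
      exact zero_mem _
  | zero => simp
  | add p q _ _ hp hq => simpa only [coeff_add, map_add] using add_mem hp hq

theorem exists_mem_closure_coeff_eq {p : MvPolynomial σ R}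
    (hp : p ∈ AddSubmonoid.closure (m.leadingTerm '' Q)) :
    ∃ s ∈ AddSubmonoid.closure {q ∈ Q | m.degree q ≼[m] d}, s.coeff d = p.coeff d := by
  classical
  induction hp using AddSubmonoid.closure_induction with
  | mem _ hp =>
    obtain ⟨q, hq, rfl⟩ := hp
    by_cases hd : m.degree q = d
    · subst hd
      refine ⟨q, AddSubmonoid.subset_closure ⟨hq, le_rfl⟩, ?_⟩
      exact (m.coeff_degree_leadingTerm q).symm
    · exact ⟨0, zero_mem _, by simp [leadingTerm, coeff_monomial, hd]⟩
  | zero => exact ⟨0, zero_mem _, rfl⟩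
  | add _ _ _ _ hp hq =>
    obtain ⟨s, hs, hsp⟩ := hp
    obtain ⟨t, ht, htq⟩ := hq
    exact ⟨s + t, add_mem hs ht, by rw [coeff_add, coeff_add, hsp, htq]⟩

theorem mem_closure_of_forall_leadingTerm_mem {V : AddSubgroup (MvPolynomial σ R)} (hQV : Q ⊆ V)
    (hlt : ∀ h ∈ V, m.leadingTerm h ∈ AddSubmonoid.closure (m.leadingTerm '' Q))
    {h : MvPolynomial σ R} (hV : h ∈ V) :
    h ∈ AddSubmonoid.closure {q ∈ Q | m.degree q ≼[m] m.degree h} := by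
  induction hd : m.toSyn (m.degree h) using WellFoundedLT.induction generalizing h with
  | ind d ih =>
    subst hd
    obtain ⟨s, hs, hcoeff⟩ := m.exists_mem_closure_coeff_eq (d := m.degree h) (hlt h hV)
    rw [m.coeff_degree_leadingTerm] at hcoeff
    have hsV : s ∈ V := AddSubmonoid.closure_le.mpr (fun q hq => hQV hq.1) hs
    suffices hrest : h - s ∈ AddSubmonoid.closure {q ∈ Q | m.degree q ≼[m] m.degree h} by
      simpa using add_mem hs hrest
    rcases eq_or_ne (h - s) 0 with h0 | h0
    · rw [h0]
      exact zero_mem _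
    have hdeg := m.degree_sub_lt_of_coeff_eq (m.degree_le_of_mem_closure hs) hcoeff h0
    refine AddSubmonoid.closure_mono ?_ (ih _ hdeg (sub_mem hV hsV) rfl)
    exact fun q hq => ⟨hq.1, hq.2.trans hdeg.le⟩

theorem forall_leadingTerm_mem_closure_iff {V : AddSubgroup (MvPolynomial σ R)} (hQV : Q ⊆ V) :
    (∀ h ∈ V, m.leadingTerm h ∈ AddSubmonoid.closure (m.leadingTerm '' Q)) ↔
      ∀ h ∈ V, h ∈ AddSubmonoid.closure {q ∈ Q | m.degree q ≼[m] m.degree h} :=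
  ⟨fun hlt _ hV => m.mem_closure_of_forall_leadingTerm_mem hQV hlt hV,
    fun hrep h hV => m.monomial_coeff_mem_closure (hrep h hV)⟩

end MonomialOrder

noncomputable section

namespace TermOrder

variable (ord : TermOrder n)

/-- `Fin n →₀ ℕ` ordered by `ord` rather than pointwise. -/
def Syn (_ : TermOrder n) : Type := Fin n →₀ ℕ

instance : AddCancelCommMonoid ord.Syn where
  toAddCommMonoid := inferInstanceAs (AddCommMonoid (Fin n →₀ ℕ))
  toIsLeftCancelAdd := inferInstanceAs (IsLeftCancelAdd (Fin n →₀ ℕ))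

instance : LinearOrder ord.Syn := ord.lo

instance : IsOrderedAddMonoid ord.Syn where
  add_le_add_left a b h c := ord.add_le_add a b c h

instance : IsOrderedCancelAddMonoid ord.Syn := IsOrderedAddMonoid.toIsOrderedCancelAddMonoid'

instance : WellFoundedLT ord.Syn := ⟨ord.wf⟩

/-- If `a < 0`, the multiples `k • a` would form an infinite descending chain. -/
theorem syn_nonneg (a : ord.Syn) : 0 ≤ a := by
  by_contra! ha
  obtain ⟨k, hk⟩ := WellFounded.not_rel_apply_succ (r := (· < ·)) (fun k : ℕ => k • a)
  exact hk (by simpa [succ_nsmul] using add_lt_of_neg_right (k • a) ha)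

def toMonomialOrder : MonomialOrder (Fin n) where
  syn := ord.Syn
  toSyn := { Equiv.refl _ with map_add' := fun _ _ => rfl }
  toSyn_monotone a b hab := by
    obtain ⟨c, rfl⟩ := exists_add_of_le hab
    exact le_add_of_nonneg_right (ord.syn_nonneg c)

theorem lp_eq_degree (p : MvPolynomial (Fin n) R) : ord.lp p = ord.toMonomialOrder.degree p := by
  rcases eq_or_ne p 0 with rfl | hp
  · simp [lp]
  obtain ⟨b, hb⟩ := @Finset.max_of_nonempty _ ord.lo _ (support_nonempty.mpr hp)
  have hlp : ord.lp p = b := by rw [lp, hb, WithBot.unbotD_coe]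
  rw [hlp]
  apply ord.toMonomialOrder.toSyn.injective
  apply le_antisymm
  · exact MonomialOrder.le_degree (@Finset.mem_of_max _ ord.lo _ _ hb)
  · have hle := @Finset.le_max _ ord.lo _ _ (ord.toMonomialOrder.degree_mem_support hp)
    rw [hb] at hle
    exact WithBot.coe_le_coe.mp hle

theorem lp_le_lp_iff {p q : MvPolynomial (Fin n) R} :
    ord.lo.le (ord.lp p) (ord.lp q) ↔
      ord.toMonomialOrder.degree p ≼[ord.toMonomialOrder] ord.toMonomialOrder.degree q := by
  rw [lp_eq_degree, lp_eq_degree]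
  rfl

theorem ltm_eq_leadingTerm : ord.ltm = ord.toMonomialOrder.leadingTerm (R := R) := by
  ext1 p
  simp only [ltm, lc, MonomialOrder.leadingTerm, MonomialOrder.leadingCoeff, lp_eq_degree]

variable {A : Subalgebra R (MvPolynomial (Fin n) R)} {I : Ideal A} {G : Set A}

theorem preimage_val_image_ltm (S : Set A) :
    (Subtype.val ⁻¹' (ord.ltm '' (Subtype.val '' S)) : Set (LtAlg ord A)) = ltA ord A '' S := by
  ext ⟨y, hy⟩
  simp [ltA, Subtype.ext_iff, eq_comm]

@[simp]
theorem coe_ltA (a : A) :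
    (ltA ord A a : MvPolynomial (Fin n) R) =
      ord.toMonomialOrder.leadingTerm (a : MvPolynomial (Fin n) R) :=
  congrFun ord.ltm_eq_leadingTerm _

theorem isSGBasis_iff_forall_ltA_mem_span (hGI : G ⊆ I) :
    IsSGBasis ord A I G ↔ ∀ h ∈ I, ltA ord A h ∈ Ideal.span (ltA ord A '' G) := by
  rw [IsSGBasis, preimage_val_image_ltm, preimage_val_image_ltm]
  refine ⟨fun hspan h hI => hspan ▸ Ideal.subset_span ⟨h, hI, rfl⟩, fun hlt => ?_⟩
  refine le_antisymm (Ideal.span_mono (Set.image_mono hGI)) (Ideal.span_le.mpr ?_)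
  rintro _ ⟨h, hI, rfl⟩
  exact hlt h hI

theorem mem_span_ltA_iff [NoZeroDivisors R] {y : LtAlg ord A} :
    y ∈ Ideal.span (ltA ord A '' G) ↔
      (y : MvPolynomial (Fin n) R) ∈ AddSubmonoid.closure (ord.toMonomialOrder.leadingTerm ''
        ((A : Set (MvPolynomial (Fin n) R)) * (Subtype.val '' G))) := by
  constructor
  · intro hy
    induction hy using Submodule.span_induction with
    | mem _ hx =>
      obtain ⟨g, hg, rfl⟩ := hx
      refine AddSubmonoid.subset_closure ⟨1 * g, Set.mul_mem_mul A.one_mem ⟨g, hg, rfl⟩, ?_⟩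
      simp
    | zero => exact zero_mem _
    | add _ _ _ _ hx hy => exact add_mem hx hy
    | smul c x _ hx =>
      have hc := ord.toMonomialOrder.mem_closure_leadingTerm_of_mem_adjoin (A := A) (x := c)
        (by rw [← ltm_eq_leadingTerm]; exact c.2)
      refine AddSubmonoid.mul_mem_closure_of_mul_subset ?_ hc hx
      refine (ord.toMonomialOrder.image_leadingTerm_mul_subset _ _).trans (Set.image_mono ?_)
      rw [← mul_assoc]
      exact Set.mul_subset_mul_right (Set.mul_subset_iff.mpr fun _ ha _ hb => A.mul_mem ha hb)
  · intro hy
    have hle : AddSubmonoid.closure (ord.toMonomialOrder.leadingTerm ''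
        ((A : Set (MvPolynomial (Fin n) R)) * (Subtype.val '' G))) ≤
          (Ideal.span (ltA ord A '' G)).toAddSubmonoid.map (LtAlg ord A).val := by
      rw [AddSubmonoid.closure_le]
      rintro _ ⟨_, ⟨a, ha, _, ⟨g, hg, rfl⟩, rfl⟩, rfl⟩
      refine ⟨ltA ord A ⟨a, ha⟩ * ltA ord A g,
        Ideal.mul_mem_left _ _ (Ideal.subset_span ⟨g, hg, rfl⟩), ?_⟩
      simp
    obtain ⟨y', hy', hyy'⟩ := hle hy
    rwa [← Subtype.ext hyy']

theorem forall_leadingTerm_mem_closure_iff (hGI : G ⊆ I) :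
    (∀ h ∈ I, ord.toMonomialOrder.leadingTerm (h : MvPolynomial (Fin n) R) ∈
        AddSubmonoid.closure (ord.toMonomialOrder.leadingTerm ''
          ((A : Set (MvPolynomial (Fin n) R)) * (Subtype.val '' G)))) ↔
      ∀ h ∈ I, (h : MvPolynomial (Fin n) R) ∈ AddSubmonoid.closure
        {q ∈ (A : Set (MvPolynomial (Fin n) R)) * (Subtype.val '' G) |
          ord.toMonomialOrder.degree q ≼[ord.toMonomialOrder]
            ord.toMonomialOrder.degree (h : MvPolynomial (Fin n) R)} := by
  have hQV : (A : Set (MvPolynomial (Fin n) R)) * (Subtype.val '' G) ⊆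
      I.toAddSubgroup.map (A.val : A →+ MvPolynomial (Fin n) R) := by
    rintro _ ⟨a, ha, _, ⟨g, hg, rfl⟩, rfl⟩
    exact ⟨⟨a, ha⟩ * g, I.mul_mem_left _ (hGI hg), rfl⟩
  simpa using ord.toMonomialOrder.forall_leadingTerm_mem_closure_iff hQV

variable (A G) in
def HasSGRepresentation (h : A) : Prop :=
  ∃ (M : ℕ) (a : Fin M → A) (g : Fin M → A),
    (∀ i, g i ∈ G) ∧
    (h : MvPolynomial (Fin n) R) =
      ∑ i, (a i : MvPolynomial (Fin n) R) * (g i : MvPolynomial (Fin n) R) ∧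
    (∀ i, ord.lo.le
      (ord.lp ((a i : MvPolynomial (Fin n) R) * (g i : MvPolynomial (Fin n) R)))
      (ord.lp (h : MvPolynomial (Fin n) R))) ∧
    (∃ i, ord.lp ((a i : MvPolynomial (Fin n) R) * (g i : MvPolynomial (Fin n) R))
      = ord.lp (h : MvPolynomial (Fin n) R))

theorem mem_closure_iff_hasSGRepresentation {h : A} :
    (h : MvPolynomial (Fin n) R) ∈ AddSubmonoid.closure
      {q ∈ (A : Set (MvPolynomial (Fin n) R)) * (Subtype.val '' G) |
        ord.toMonomialOrder.degree q ≼[ord.toMonomialOrder]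
          ord.toMonomialOrder.degree (h : MvPolynomial (Fin n) R)} ↔
      ((h : MvPolynomial (Fin n) R) ≠ 0 → HasSGRepresentation ord A G h) := by
  constructor
  · intro hmem hh
    obtain ⟨l, hl, hsum⟩ := AddSubmonoid.exists_list_of_mem_closure hmem
    have hprod : ∀ i : Fin l.length,
        ∃ a : A, ∃ g ∈ G, (a : MvPolynomial (Fin n) R) * g = l[i] := by
      intro i
      obtain ⟨⟨a, ha, _, ⟨g, hg, rfl⟩, hag⟩, -⟩ := hl l[i] (List.getElem_mem i.2)
      exact ⟨⟨a, ha⟩, g, hg, hag⟩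
    choose a g hg hag using hprod
    have hsum' : (h : MvPolynomial (Fin n) R) =
        ∑ i, (a i : MvPolynomial (Fin n) R) * (g i : MvPolynomial (Fin n) R) := by
      simp [hag, hsum]
    have hle : ∀ i, ord.lo.le
        (ord.lp ((a i : MvPolynomial (Fin n) R) * (g i : MvPolynomial (Fin n) R)))
        (ord.lp (h : MvPolynomial (Fin n) R)) := by
      intro i
      rw [lp_le_lp_iff, hag]
      exact (hl _ (List.getElem_mem i.2)).2
    obtain ⟨i, -, hi⟩ := ord.toMonomialOrder.exists_degree_eq_of_eq_sum hh hsum'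
      fun i _ => (ord.lp_le_lp_iff).mp (hle i)
    exact ⟨l.length, a, g, hg, hsum', hle, i, by rw [lp_eq_degree, lp_eq_degree, hi]⟩
  · intro hrep
    rcases eq_or_ne (h : MvPolynomial (Fin n) R) 0 with hh | hh
    · rw [hh]
      exact zero_mem _
    obtain ⟨M, a, g, hg, hsum, hle, -⟩ := hrep hh
    rw [hsum]
    refine sum_mem fun i _ => AddSubmonoid.subset_closure ⟨?_, ?_⟩
    · exact Set.mul_mem_mul (a i).2 ⟨g i, hg i, rfl⟩
    · rw [← lp_le_lp_iff, ← hsum]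
      exact hle i

end TermOrder

end

theorem isSGBasis_iff_sg_representation_general {n : ℕ} {R : Type*} [CommRing R]
    [IsDomain R] (ord : TermOrder n)
    (A : Subalgebra R (MvPolynomial (Fin n) R)) (I : Ideal A) (G : Set A)
    (hGI : G ⊆ (I : Set A)) :
    IsSGBasis ord A I G ↔
      ∀ h : A, h ∈ I → (h : MvPolynomial (Fin n) R) ≠ 0 →
        ∃ (M : ℕ) (a : Fin M → A) (g : Fin M → A),
          (∀ i, g i ∈ G) ∧
          (h : MvPolynomial (Fin n) R) =
            ∑ i, (a i : MvPolynomial (Fin n) R) * (g i : MvPolynomial (Fin n) R) ∧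
          (∀ i, ord.lo.le
            (ord.lp ((a i : MvPolynomial (Fin n) R) * (g i : MvPolynomial (Fin n) R)))
            (ord.lp (h : MvPolynomial (Fin n) R))) ∧
          (∃ i, ord.lp ((a i : MvPolynomial (Fin n) R) * (g i : MvPolynomial (Fin n) R))
            = ord.lp (h : MvPolynomial (Fin n) R)) := by
  rw [ord.isSGBasis_iff_forall_ltA_mem_span hGI]
  simp only [ord.mem_span_ltA_iff, TermOrder.coe_ltA]
  rw [ord.forall_leadingTerm_mem_closure_iff hGI]
  exact forall₂_congr fun h _ => ord.mem_closure_iff_hasSGRepresentation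

/-- `G ⊆ I` is an SG-basis for the ideal `I` of `A` iff every
nonzero `h ∈ I` has an SG-representation `h = ∑ aᵢ gᵢ` with `aᵢ ∈ A`, `gᵢ ∈ G`
and `maxᵢ lp(aᵢ gᵢ) = lp(h)`. -/
theorem isSGBasis_iff_sg_representation {n : ℕ} {R : Type*} [CommRing R]
    [IsDomain R] [IsNoetherianRing R] (ord : TermOrder n)
    (A : Subalgebra R (MvPolynomial (Fin n) R)) (I : Ideal A) (G : Set A)
    (hGI : G ⊆ (I : Set A)) :
    IsSGBasis ord A I G ↔
      ∀ h : A, h ∈ I → (h : MvPolynomial (Fin n) R) ≠ 0 →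
        ∃ (M : ℕ) (a : Fin M → A) (g : Fin M → A),
          (∀ i, g i ∈ G) ∧
          (h : MvPolynomial (Fin n) R) =
            ∑ i, (a i : MvPolynomial (Fin n) R) * (g i : MvPolynomial (Fin n) R) ∧
          (∀ i, ord.lo.le
            (ord.lp ((a i : MvPolynomial (Fin n) R) * (g i : MvPolynomial (Fin n) R)))
            (ord.lp (h : MvPolynomial (Fin n) R))) ∧
          (∃ i, ord.lp ((a i : MvPolynomial (Fin n) R) * (g i : MvPolynomial (Fin n) R))
            = ord.lp (h : MvPolynomial (Fin n) R)) :=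
  isSGBasis_iff_sg_representation_general ord A I G hGI
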